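/- Let σ be a permutation of {1, …, n} and let x_σ ∈ GL_n(ℚ_p) be the corresponding permutation matrix. Then x_σ satisfies the three conditions (a) x_σ^{−1}·(L(ℚ_p) ∩ B(ℚ_p))·x_σ ⊆ B(ℚ_p), (b) x_σ·(L(ℚ_p) ∩ B(ℚ_p))·x_σ^{−1} ⊆ B(ℚ_p), and (c) x_σ·L(ℚ_p)·x_σ^{−1} = L(ℚ_p), if and only if there exists a permutation ρ of {1, …, t} with n_{ρ(j)} = n_j for all j such that σ maps each block interval {D(j−1)+1, …, D(j)} onto the block interval {D(ρ(j)−1)+1, …, D(ρ(j))} in an order-preserving way, i.e., σ(D(j−1)+k) = D(ρ(j)−1)+k for all 1 ≤ k ≤ n_j. (These are the elements of the set W(L,L) of the relative Weyl group; in other words, W(L,L) consists exactly of the permutations of the GL_{n_k}-blocks of L of the same size.) -/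

import Mathlib

/-!
STATEMENT 10: Let σ be a permutation of {1, …, n} and x_σ ∈ GL_n(ℚ_p) the corresponding
permutation matrix. Then x_σ satisfies
 (a) x_σ⁻¹·(L(ℚ_p) ∩ B(ℚ_p))·x_σ ⊆ B(ℚ_p),
 (b) x_σ·(L(ℚ_p) ∩ B(ℚ_p))·x_σ⁻¹ ⊆ B(ℚ_p),
 (c) x_σ·L(ℚ_p)·x_σ⁻¹ = L(ℚ_p),
if and only if there exists a permutation ρ of {1, …, t} with n_{ρ(j)} = n_j for all j
such that σ maps each block interval onto the block interval of ρ(j) in an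
order-preserving way: σ(D(j−1)+k) = D(ρ(j)−1)+k for all 1 ≤ k ≤ n_j.
-/

open Matrix

noncomputable section
namespace PIw

/-- Partial sums of the partition: `Dsum nn j = n_1 + ⋯ + n_j` (`nn` is 0-indexed). -/
def Dsum {t : ℕ} (nn : Fin t → ℕ) (j : ℕ) : ℕ :=
  ∑ i ∈ Finset.range j, if h : i < t then nn ⟨i, h⟩ else 0

lemma Dsum_mono {t : ℕ} (nn : Fin t → ℕ) {a b : ℕ} (h : a ≤ b) :
    Dsum nn a ≤ Dsum nn b :=
  Finset.sum_le_sum_of_subset (Finset.range_subset_range.mpr h)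

lemma Dsum_succ {t : ℕ} (nn : Fin t → ℕ) (j : Fin t) :
    Dsum nn ((j : ℕ) + 1) = Dsum nn (j : ℕ) + nn j := by
  unfold Dsum
  rw [Finset.sum_range_succ]
  simp [j.isLt]

/-- Index (0-indexed) of the block containing position `k`. -/
def blkOf {t : ℕ} (nn : Fin t → ℕ) (k : ℕ) : ℕ :=
  ((Finset.range t).filter fun j => Dsum nn (j + 1) ≤ k).card

/-- The block function on `Fin n`. -/
def bfun {t : ℕ} (nn : Fin t → ℕ) : Fin (Dsum nn t) → ℕ := fun k => blkOf nn (k : ℕ)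

/-- Embedding of the index set of the `j`-th diagonal block into `Fin n`. -/
def blockEmb {t : ℕ} (nn : Fin t → ℕ) (j : Fin t) (k : Fin (nn j)) :
    Fin (Dsum nn t) :=
  ⟨Dsum nn (j : ℕ) + (k : ℕ), by
    have h1 := Dsum_succ nn j
    have h2 : Dsum nn ((j : ℕ) + 1) ≤ Dsum nn t := Dsum_mono nn j.isLt
    have h3 : (k : ℕ) < nn j := k.isLt
    omega⟩

variable (p : ℕ) [Fact p.Prime]

/-- Upper triangular matrices. -/
def IsUpper {N : ℕ} (M : Matrix (Fin N) (Fin N) ℚ_[p]) : Prop :=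
  ∀ k l : Fin N, l < k → M k l = 0

/-- Block diagonal matrices (for the given partition). -/
def IsBlockDiag {t : ℕ} (nn : Fin t → ℕ)
    (M : Matrix (Fin (Dsum nn t)) (Fin (Dsum nn t)) ℚ_[p]) : Prop :=
  ∀ k l, bfun nn k ≠ bfun nn l → M k l = 0

/-- Membership in the Borel subgroup `B(ℚ_p)` of invertible upper-triangular matrices. -/
def memB {N : ℕ} (M : Matrix (Fin N) (Fin N) ℚ_[p]) : Prop :=
  IsUnit M ∧ IsUpper p M

/-- Membership in the Levi subgroup `L(ℚ_p)` of invertible block-diagonal matrices. -/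
def memL {t : ℕ} (nn : Fin t → ℕ)
    (M : Matrix (Fin (Dsum nn t)) (Fin (Dsum nn t)) ℚ_[p]) : Prop :=
  IsUnit M ∧ IsBlockDiag p nn M

/-- Membership in `L(ℚ_p) ∩ B(ℚ_p)`. -/
def memLB {t : ℕ} (nn : Fin t → ℕ)
    (M : Matrix (Fin (Dsum nn t)) (Fin (Dsum nn t)) ℚ_[p]) : Prop :=
  IsUnit M ∧ IsBlockDiag p nn M ∧ IsUpper p M

/-- The permutation matrix `x_σ` (with `(x_σ)_{σ(l), l} = 1`). -/
def permMat {N : ℕ} (σ : Equiv.Perm (Fin N)) : Matrix (Fin N) (Fin N) ℚ_[p] :=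
  fun k l => if σ l = k then 1 else 0

/-- The inverse permutation matrix `x_σ⁻¹ = x_{σ⁻¹}`. -/
def permMatInv {N : ℕ} (σ : Equiv.Perm (Fin N)) : Matrix (Fin N) (Fin N) ℚ_[p] :=
  fun k l => if σ k = l then 1 else 0

/-!
Conjugation by `x_σ` only relabels entries: `(x_σ M x_σ⁻¹)_{k,l} = M_{σ⁻¹ k, σ⁻¹ l}`.
Testing (b) and (c) on the elementary matrices `1 + E_{ab}` with `a, b` in a common block shows
that `σ` respects the block decomposition in both directions and increases inside each block;
conversely these two properties give (a)–(c) entry by entry. Such a `σ` maps each block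
injectively into a single block, which is therefore at least as large; the induced map on blocks
is a permutation, so summing over the blocks turns all these inequalities into equalities, and an
increasing map between intervals of the same length is a translation.
-/

section Blocks

variable {t : ℕ} {nn : Fin t → ℕ}

lemma bfun_blockEmb (j : Fin t) (k : Fin (nn j)) : bfun nn (blockEmb nn j k) = j := by
  have hj := Dsum_succ nn j
  have hk := k.isLt
  have hfilter : (Finset.range t).filter (fun i => Dsum nn (i + 1) ≤ Dsum nn j + k) =
      Finset.range j := by
    ext i
    simp only [Finset.mem_filter, Finset.mem_range]
    constructor
    · rintro ⟨-, hi⟩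
      by_contra! hji
      have := Dsum_mono nn (show (j : ℕ) + 1 ≤ i + 1 by omega)
      omega
    · intro hij
      have := Dsum_mono nn (show i + 1 ≤ j by omega)
      exact ⟨hij.trans j.isLt, by omega⟩
  unfold bfun blkOf
  rw [← Finset.card_range (j : ℕ), ← hfilter]
  rfl

lemma exists_eq_blockEmb (a : Fin (Dsum nn t)) : ∃ j k, a = blockEmb nn j k := by
  suffices h : ∀ J ≤ t, ∀ m < Dsum nn J, ∃ j : Fin t, ∃ k < nn j, m = Dsum nn j + k by
    obtain ⟨j, k, hk, ha⟩ := h t le_rfl a a.isLt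
    exact ⟨j, ⟨k, hk⟩, Fin.ext ha⟩
  intro J
  induction J with
  | zero => simp [Dsum]
  | succ J ih =>
    intro hJ m hm
    have hs := Dsum_succ nn ⟨J, hJ⟩
    by_cases h : m < Dsum nn J
    · exact ih (by omega) m h
    · exact ⟨⟨J, hJ⟩, m - Dsum nn J, by simp only at hs; omega, by simp only; omega⟩

lemma exists_eq_blockEmb_of_bfun_eq {a : Fin (Dsum nn t)} {j : Fin t} (h : bfun nn a = j) :
    ∃ k, a = blockEmb nn j k := by
  obtain ⟨j', k, rfl⟩ := exists_eq_blockEmb a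
  obtain rfl : j' = j := Fin.ext (by rwa [bfun_blockEmb] at h)
  exact ⟨k, rfl⟩

lemma blockEmb_lt_blockEmb_iff {j : Fin t} {k k' : Fin (nn j)} :
    blockEmb nn j k < blockEmb nn j k' ↔ k < k' := by
  simp only [Fin.lt_def, blockEmb, Nat.add_lt_add_iff_left]

end Blocks

lemma Equiv.Perm.comp_eq_of_le {ι M : Type*} [Fintype ι] [AddCommMonoid M] [PartialOrder M]
    [IsOrderedCancelAddMonoid M] {ρ : Equiv.Perm ι} {f : ι → M}
    (h : f ≤ f ∘ ρ) : f ∘ ρ = f := by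
  have hsum : ∑ i, f i = ∑ i, f (ρ i) := (Equiv.sum_comp ρ f).symm
  funext i
  exact ((Finset.sum_eq_sum_iff_of_le fun i _ => h i).mp hsum i (Finset.mem_univ i)).symm

section BlockPermutations

variable {t : ℕ} {nn : Fin t → ℕ} {σ : Equiv.Perm (Fin (Dsum nn t))}

def PreservesBlocks (nn : Fin t → ℕ) (σ : Equiv.Perm (Fin (Dsum nn t))) : Prop :=
  ∀ a b, bfun nn (σ a) = bfun nn (σ b) ↔ bfun nn a = bfun nn b

def StrictMonoOnBlocks (nn : Fin t → ℕ) (σ : Equiv.Perm (Fin (Dsum nn t))) : Prop :=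
  ∀ a b, bfun nn a = bfun nn b → a < b → σ a < σ b

def PermutesBlocks (nn : Fin t → ℕ) (σ : Equiv.Perm (Fin (Dsum nn t)))
    (ρ : Equiv.Perm (Fin t)) : Prop :=
  (∀ j, nn (ρ j) = nn j) ∧
    ∀ (j : Fin t) (k : Fin (nn j)), (σ (blockEmb nn j k) : ℕ) = Dsum nn (ρ j : ℕ) + k

lemma PreservesBlocks.symm (hP : PreservesBlocks nn σ) : PreservesBlocks nn σ.symm :=
  fun a b => by simpa using (hP (σ.symm a) (σ.symm b)).symm

lemma StrictMonoOnBlocks.symm (hP : PreservesBlocks nn σ) (hS : StrictMonoOnBlocks nn σ) :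
    StrictMonoOnBlocks nn σ.symm := by
  intro a b hab hlt
  by_contra! hle
  obtain heq | hlt' := hle.eq_or_lt
  · exact hlt.ne (σ.symm.injective heq).symm
  · have := hS _ _ ((hP.symm b a).mpr hab.symm) hlt'
    simp only [Equiv.apply_symm_apply] at this
    exact hlt.not_gt this

lemma PermutesBlocks.apply_blockEmb {ρ : Equiv.Perm (Fin t)} (h : PermutesBlocks nn σ ρ)
    (j : Fin t) (k : Fin (nn j)) :
    σ (blockEmb nn j k) = blockEmb nn (ρ j) (Fin.cast (h.1 j).symm k) :=
  Fin.ext (h.2 j k)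

lemma PermutesBlocks.preservesBlocks {ρ : Equiv.Perm (Fin t)} (h : PermutesBlocks nn σ ρ) :
    PreservesBlocks nn σ := by
  intro a b
  obtain ⟨j, k, rfl⟩ := exists_eq_blockEmb a
  obtain ⟨j', k', rfl⟩ := exists_eq_blockEmb b
  simp only [h.apply_blockEmb, bfun_blockEmb, Fin.val_inj, EmbeddingLike.apply_eq_iff_eq]

lemma PermutesBlocks.strictMonoOnBlocks {ρ : Equiv.Perm (Fin t)} (h : PermutesBlocks nn σ ρ) :
    StrictMonoOnBlocks nn σ := by
  intro a b hab hlt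
  obtain ⟨j, k, rfl⟩ := exists_eq_blockEmb a
  obtain ⟨j', k', rfl⟩ := exists_eq_blockEmb b
  obtain rfl : j = j' := by simpa only [bfun_blockEmb, Fin.val_inj] using hab
  rw [blockEmb_lt_blockEmb_iff] at hlt
  simpa only [h.apply_blockEmb, blockEmb_lt_blockEmb_iff, Fin.cast_lt_cast] using hlt

lemma PreservesBlocks.exists_blockMap (hpos : ∀ j, 0 < nn j) (hP : PreservesBlocks nn σ) :
    ∃ F : Fin t → Fin t, Function.Injective F ∧
      ∀ j k, bfun nn (σ (blockEmb nn j k)) = F j := by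
  choose F k₀ hF using fun j => exists_eq_blockEmb (σ (blockEmb nn j ⟨0, hpos j⟩))
  have hbfun : ∀ j k, bfun nn (σ (blockEmb nn j k)) = F j := fun j k => by
    rw [(hP _ (blockEmb nn j ⟨0, hpos j⟩)).mpr (by simp only [bfun_blockEmb]), hF,
      bfun_blockEmb]
  refine ⟨F, fun j j' hjj' => ?_, hbfun⟩
  have := (hP (blockEmb nn j ⟨0, hpos j⟩) (blockEmb nn j' ⟨0, hpos j'⟩)).mp
    (by rw [hbfun, hbfun, hjj'])
  simpa only [bfun_blockEmb, Fin.val_inj] using this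

lemma StrictMonoOnBlocks.exists_strictMono (hS : StrictMonoOnBlocks nn σ) {i j : Fin t}
    (hj : ∀ k, bfun nn (σ (blockEmb nn j k)) = i) :
    ∃ g : Fin (nn j) → Fin (nn i), StrictMono g ∧
      ∀ k, σ (blockEmb nn j k) = blockEmb nn i (g k) := by
  choose g hg using fun k => exists_eq_blockEmb_of_bfun_eq (hj k)
  refine ⟨g, fun k k' hkk' => ?_, hg⟩
  rw [← blockEmb_lt_blockEmb_iff (nn := nn), ← hg, ← hg]
  exact hS _ _ (by simp only [bfun_blockEmb]) (blockEmb_lt_blockEmb_iff.mpr hkk')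

lemma exists_permutesBlocks (hpos : ∀ j, 0 < nn j) (hP : PreservesBlocks nn σ)
    (hS : StrictMonoOnBlocks nn σ) : ∃ ρ, PermutesBlocks nn σ ρ := by
  obtain ⟨F, hFinj, hF⟩ := hP.exists_blockMap hpos
  choose g hgmono hg using fun j => hS.exists_strictMono (hF j)
  let ρ := Equiv.ofBijective F hFinj.bijective_of_finite
  have hsize : ∀ j, nn (ρ j) = nn j :=
    congrFun (Equiv.Perm.comp_eq_of_le fun j => Fin.le_of_injective _ (hgmono j).injective)
  refine ⟨ρ, hsize, fun j k => ?_⟩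
  have hid : (g j k : ℕ) = k :=
    congrArg Fin.val ((Fin.cast_strictMono (hsize j)).comp (hgmono j)).apply_eq
  rw [hg]
  exact congrArg (Dsum nn (F j) + ·) hid

end BlockPermutations

section Matrices

variable {N : ℕ}

lemma permMatInv_eq_permMatrix (σ : Equiv.Perm (Fin N)) :
    permMatInv p σ = σ.permMatrix ℚ_[p] := by
  ext k l
  simp [permMatInv, PEquiv.toMatrix_apply]

lemma permMat_eq_permMatrix (σ : Equiv.Perm (Fin N)) :
    permMat p σ = σ⁻¹.permMatrix ℚ_[p] := by
  ext k l
  simp [permMat, PEquiv.toMatrix_apply, Equiv.eq_symm_apply, eq_comm]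

lemma permMatInv_mul_mul_permMat (σ : Equiv.Perm (Fin N)) (M : Matrix (Fin N) (Fin N) ℚ_[p]) :
    permMatInv p σ * M * permMat p σ = M.submatrix σ σ := by
  rw [permMatInv_eq_permMatrix, permMat_eq_permMatrix, PEquiv.toMatrix_toPEquiv_mul,
    PEquiv.mul_toMatrix_toPEquiv, submatrix_submatrix, Equiv.Perm.inv_def]
  rfl

lemma permMat_mul_mul_permMatInv (σ : Equiv.Perm (Fin N)) (M : Matrix (Fin N) (Fin N) ℚ_[p]) :
    permMat p σ * M * permMatInv p σ = M.submatrix σ.symm σ.symm := by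
  rw [permMatInv_eq_permMatrix, permMat_eq_permMatrix, PEquiv.toMatrix_toPEquiv_mul,
    PEquiv.mul_toMatrix_toPEquiv, submatrix_submatrix, Equiv.Perm.inv_def]
  rfl

lemma isUnit_transvection {a b : Fin N} (hab : a ≠ b) : IsUnit (transvection a b (1 : ℚ_[p])) := by
  rw [isUnit_iff_isUnit_det, det_transvection_of_ne _ _ hab]
  exact isUnit_one

lemma transvection_apply_of_ne {a b k l : Fin N} (hkl : k ≠ l) (h : ¬(k = a ∧ l = b)) :
    transvection a b (1 : ℚ_[p]) k l = 0 := by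
  simp only [transvection, Matrix.add_apply, one_apply_ne hkl, Matrix.single_apply]
  rw [zero_add, if_neg fun hab => h ⟨hab.1.symm, hab.2.symm⟩]

lemma transvection_apply_same {a b : Fin N} (hab : a ≠ b) :
    transvection a b (1 : ℚ_[p]) a b = 1 := by
  simp [transvection, one_apply_ne hab]

end Matrices

section Levi

variable {t : ℕ} {nn : Fin t → ℕ}

lemma IsBlockDiag.bfun_eq_of_ne_zero {M : Matrix (Fin (Dsum nn t)) (Fin (Dsum nn t)) ℚ_[p]}
    (hM : IsBlockDiag p nn M) {a b : Fin (Dsum nn t)} (h : M a b ≠ 0) :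
    bfun nn a = bfun nn b :=
  not_imp_comm.mp (hM a b) h

lemma memL_transvection {a b : Fin (Dsum nn t)} (hab : a ≠ b) (h : bfun nn a = bfun nn b) :
    memL p nn (transvection a b 1) := by
  refine ⟨isUnit_transvection p hab, fun k l hkl => transvection_apply_of_ne p ?_ ?_⟩
  · rintro rfl
    exact hkl rfl
  · rintro ⟨rfl, rfl⟩
    exact hkl h

lemma memLB_transvection {a b : Fin (Dsum nn t)} (hab : a < b) (h : bfun nn a = bfun nn b) :
    memLB p nn (transvection a b 1) := by
  refine ⟨isUnit_transvection p hab.ne, (memL_transvection p hab.ne h).2, fun k l hlk => ?_⟩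
  refine transvection_apply_of_ne p hlk.ne' ?_
  rintro ⟨rfl, rfl⟩
  exact hab.not_gt hlk

lemma memL_submatrix {τ : Equiv.Perm (Fin (Dsum nn t))} (hP : PreservesBlocks nn τ)
    {M : Matrix (Fin (Dsum nn t)) (Fin (Dsum nn t)) ℚ_[p]} (hM : memL p nn M) :
    memL p nn (M.submatrix τ τ) :=
  ⟨(isUnit_submatrix_equiv τ τ).mpr hM.1, fun k l hkl => hM.2 _ _ fun h => hkl ((hP k l).mp h)⟩

lemma submatrix_image_memL_eq {τ : Equiv.Perm (Fin (Dsum nn t))} (hP : PreservesBlocks nn τ) :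
    {M' | ∃ M, memL p nn M ∧ M' = M.submatrix τ τ} = {M | memL p nn M} := by
  ext M'
  constructor
  · rintro ⟨M, hM, rfl⟩
    exact memL_submatrix p hP hM
  · intro hM'
    exact ⟨M'.submatrix τ.symm τ.symm, memL_submatrix p hP.symm hM', by simp⟩

lemma submatrix_image_memLB_subset {τ : Equiv.Perm (Fin (Dsum nn t))}
    (hP : PreservesBlocks nn τ) (hS : StrictMonoOnBlocks nn τ) :
    {M' | ∃ M, memLB p nn M ∧ M' = M.submatrix τ τ} ⊆ {M | memB p M} := by
  rintro _ ⟨M, ⟨hunit, hdiag, hupper⟩, rfl⟩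
  refine ⟨(isUnit_submatrix_equiv τ τ).mpr hunit, fun k l hlk => ?_⟩
  by_cases hkl : bfun nn (τ k) = bfun nn (τ l)
  · exact hupper _ _ (hS l k ((hP l k).mp hkl.symm) hlk)
  · exact hdiag _ _ hkl

lemma preservesBlocks_of_submatrix_image_memL_eq {τ : Equiv.Perm (Fin (Dsum nn t))}
    (h : {M' | ∃ M, memL p nn M ∧ M' = M.submatrix τ τ} = {M | memL p nn M}) :
    PreservesBlocks nn τ := by
  intro a b
  rcases eq_or_ne a b with rfl | hab
  · simp
  constructor
  · intro hτ
    have hM : memL p nn ((transvection (τ a) (τ b) 1).submatrix τ τ) :=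
      (Set.ext_iff.mp h _).mp ⟨_, memL_transvection p (τ.injective.ne hab) hτ, rfl⟩
    exact hM.2.bfun_eq_of_ne_zero p (by simp [transvection_apply_same p (τ.injective.ne hab)])
  · intro hblk
    obtain ⟨M, hM, hMeq⟩ := (Set.ext_iff.mp h _).mpr (memL_transvection p hab hblk)
    have hentry : M (τ a) (τ b) = 1 := by
      rw [← transvection_apply_same p hab, hMeq, submatrix_apply]
    exact hM.2.bfun_eq_of_ne_zero p (by simp [hentry])

lemma strictMonoOnBlocks_of_submatrix_image_memLB_subset {τ : Equiv.Perm (Fin (Dsum nn t))}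
    (h : {M' | ∃ M, memLB p nn M ∧ M' = M.submatrix τ.symm τ.symm} ⊆ {M | memB p M}) :
    StrictMonoOnBlocks nn τ := by
  intro a b hab hlt
  have hB : memB p ((transvection a b 1).submatrix τ.symm τ.symm) :=
    h ⟨_, memLB_transvection p hlt hab, rfl⟩
  refine lt_of_le_of_ne (not_lt.mp fun hba => ?_) (τ.injective.ne hlt.ne)
  have := hB.2 (τ a) (τ b) hba
  simp [transvection_apply_same p hlt.ne] at this

end Levi

/-- `x_σ` satisfies (a) `x_σ⁻¹·(L ∩ B)·x_σ ⊆ B`,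
(b) `x_σ·(L ∩ B)·x_σ⁻¹ ⊆ B` and (c) `x_σ·L·x_σ⁻¹ = L` if and only if `σ` permutes the
blocks of the partition (preserving sizes) in an order-preserving way. -/
theorem weyl_group_of_levi {t : ℕ} (nn : Fin t → ℕ) (hpos : ∀ j, 0 < nn j)
    (σ : Equiv.Perm (Fin (Dsum nn t))) :
    (({M' | ∃ M, memLB p nn M ∧ M' = permMatInv p σ * M * permMat p σ} ⊆
        {M | memB p M}) ∧
      ({M' | ∃ M, memLB p nn M ∧ M' = permMat p σ * M * permMatInv p σ} ⊆
        {M | memB p M}) ∧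
      {M' | ∃ M, memL p nn M ∧ M' = permMat p σ * M * permMatInv p σ} =
        {M | memL p nn M}) ↔
      ∃ ρ : Equiv.Perm (Fin t), (∀ j, nn (ρ j) = nn j) ∧
        ∀ (j : Fin t) (k : Fin (nn j)),
          ((σ (blockEmb nn j k) : ℕ)) = Dsum nn ((ρ j : Fin t) : ℕ) + (k : ℕ) := by
  simp only [permMatInv_mul_mul_permMat, permMat_mul_mul_permMatInv]
  constructor
  · rintro ⟨-, hB, hL⟩
    have hP : PreservesBlocks nn σ := by
      simpa using (preservesBlocks_of_submatrix_image_memL_eq p hL).symm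
    exact exists_permutesBlocks hpos hP (strictMonoOnBlocks_of_submatrix_image_memLB_subset p hB)
  · rintro ⟨ρ, hρ : PermutesBlocks nn σ ρ⟩
    have hP := hρ.preservesBlocks
    have hS := hρ.strictMonoOnBlocks
    exact ⟨submatrix_image_memLB_subset p hP hS,
      submatrix_image_memLB_subset p hP.symm (hS.symm hP), submatrix_image_memL_eq p hP.symm⟩

end PIw
end
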